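/- arXiv:2111.04811 — 4 statements merged into one kernel-verified Lean document; each statement's English description precedes it below -/
import Mathlib

section
/- Let L : R × R → R be real-analytic at (qᵃ, q̇ᵃ) and separable: L(q,q̇) = V(q̇) + W(q). Define the discrete Lagrangian L_d(q0,q1) = Δt · L(b q0 + c q1, (q1−q0)/Δt) with Δt > 0 and constants b, c. Define L̃_d(q0,q1) = Δt · L̃(b q0 + c q1, (q1−q0)/Δt), where L̃ is the second-order Taylor polynomial of L at (qᵃ, q̇ᵃ). Then for any point (q0ᵃ, q1ᵃ) satisfying b q0ᵃ + c q1ᵃ = qᵃ and (q1ᵃ − q0ᵃ)/Δt = q̇ᵃ, the first-order Taylor approximations (Jacobian linearizations) of D₁L_d and D₂L_d at (q0ᵃ, q1ᵃ) coincide with D₁L̃_d and D₂L̃_d respectively, as affine functions of (q0,q1). -/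
/-!
Both `L_d` and `L̃_d` have the separable shape `α f((q₁ - q₀)/Δt) + β g(b q₀ + c q₁)`, with
`(f, g) = (V, W)` for `L_d` and `(f, g)` the quadratic Taylor polynomials of `(V, W)` for `L̃_d`.
Since the arguments are affine in `(q₀, q₁)`, each partial derivative of such an expression has
the same shape with `(f', g')`, and its Jacobian linearization has the same shape with `f, g`
replaced by their first-order Taylor polynomials. The first-order Taylor polynomial of `V'`
is the derivative of the second-order Taylor polynomial of `V`, which gives the claim.
-/

open Filter Topology

noncomputable section

def linearTaylor (f : ℝ → ℝ) (a x : ℝ) : ℝ :=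
  f a + deriv f a * (x - a)

def quadraticTaylor (f : ℝ → ℝ) (a x : ℝ) : ℝ :=
  f a + deriv f a * (x - a) + 1 / 2 * deriv (deriv f) a * (x - a) ^ 2

theorem hasDerivAt_quadraticTaylor (f : ℝ → ℝ) (a x : ℝ) :
    HasDerivAt (quadraticTaylor f a) (linearTaylor (deriv f) a x) x := by
  have hx : HasDerivAt (fun x : ℝ => x - a) 1 x := (hasDerivAt_id x).sub_const a
  have h := ((hx.const_mul (deriv f a)).const_add (f a)).add
    ((hx.pow 2).const_mul (1 / 2 * deriv (deriv f) a))
  exact h.congr_deriv (by simp only [linearTaylor]; ring)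

theorem deriv_quadraticTaylor (f : ℝ → ℝ) (a : ℝ) :
    deriv (quadraticTaylor f a) = linearTaylor (deriv f) a :=
  funext fun x => (hasDerivAt_quadraticTaylor f a x).deriv

def jacobianLinearization (F : ℝ → ℝ → ℝ) (a₀ a₁ q₀ q₁ : ℝ) : ℝ :=
  F a₀ a₁ + deriv (fun x => F x a₁) a₀ * (q₀ - a₀) + deriv (fun y => F a₀ y) a₁ * (q₁ - a₁)

theorem jacobianLinearization_congr {F G : ℝ → ℝ → ℝ} {a₀ a₁ : ℝ}
    (h : (fun p : ℝ × ℝ => F p.1 p.2) =ᶠ[𝓝 (a₀, a₁)] fun p => G p.1 p.2) :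
    jacobianLinearization F a₀ a₁ = jacobianLinearization G a₀ a₁ := by
  have h₀ : (fun x => F x a₁) =ᶠ[𝓝 a₀] fun x => G x a₁ :=
    h.comp_tendsto ((Continuous.prodMk_left a₁).tendsto a₀)
  have h₁ : (fun y => F a₀ y) =ᶠ[𝓝 a₁] fun y => G a₀ y :=
    h.comp_tendsto ((Continuous.prodMk_right a₀).tendsto a₁)
  unfold jacobianLinearization
  rw [h.eq_of_nhds, h₀.deriv_eq, h₁.deriv_eq]

section DiscreteSeparable

variable (Δt b c : ℝ)

def discreteSeparable (α β : ℝ) (f g : ℝ → ℝ) (q₀ q₁ : ℝ) : ℝ :=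
  α * f ((q₁ - q₀) / Δt) + β * g (b * q₀ + c * q₁)

variable {Δt b c} {f g : ℝ → ℝ} {q₀ q₁ : ℝ}

theorem hasDerivAt_discreteSeparable_fst (α β : ℝ)
    (hf : DifferentiableAt ℝ f ((q₁ - q₀) / Δt)) (hg : DifferentiableAt ℝ g (b * q₀ + c * q₁)) :
    HasDerivAt (fun x => discreteSeparable Δt b c α β f g x q₁)
      (discreteSeparable Δt b c (-α / Δt) (β * b) (deriv f) (deriv g) q₀ q₁) q₀ := by
  have hv : HasDerivAt (fun x => (q₁ - x) / Δt) (-1 / Δt) q₀ :=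
    ((hasDerivAt_id q₀).const_sub q₁).div_const Δt
  have hq : HasDerivAt (fun x => b * x + c * q₁) b q₀ := by
    simpa using ((hasDerivAt_id q₀).const_mul b).add_const (c * q₁)
  have h := ((hf.hasDerivAt.comp q₀ hv).const_mul α).add ((hg.hasDerivAt.comp q₀ hq).const_mul β)
  exact h.congr_deriv (by simp only [discreteSeparable]; ring)

theorem hasDerivAt_discreteSeparable_snd (α β : ℝ)
    (hf : DifferentiableAt ℝ f ((q₁ - q₀) / Δt)) (hg : DifferentiableAt ℝ g (b * q₀ + c * q₁)) :
    HasDerivAt (fun y => discreteSeparable Δt b c α β f g q₀ y)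
      (discreteSeparable Δt b c (α / Δt) (β * c) (deriv f) (deriv g) q₀ q₁) q₁ := by
  have hv : HasDerivAt (fun y => (y - q₀) / Δt) (1 / Δt) q₁ :=
    ((hasDerivAt_id q₁).sub_const q₀).div_const Δt
  have hq : HasDerivAt (fun y => b * q₀ + c * y) c q₁ := by
    simpa using ((hasDerivAt_id q₁).const_mul c).const_add (b * q₀)
  have h := ((hf.hasDerivAt.comp q₁ hv).const_mul α).add ((hg.hasDerivAt.comp q₁ hq).const_mul β)
  exact h.congr_deriv (by simp only [discreteSeparable]; ring)

theorem jacobianLinearization_discreteSeparable (α β : ℝ)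
    (hf : DifferentiableAt ℝ f ((q₁ - q₀) / Δt)) (hg : DifferentiableAt ℝ g (b * q₀ + c * q₁))
    (x y : ℝ) :
    jacobianLinearization (discreteSeparable Δt b c α β f g) q₀ q₁ x y =
      discreteSeparable Δt b c α β (linearTaylor f ((q₁ - q₀) / Δt))
        (linearTaylor g (b * q₀ + c * q₁)) x y := by
  rw [jacobianLinearization, (hasDerivAt_discreteSeparable_fst α β hf hg).deriv,
    (hasDerivAt_discreteSeparable_snd α β hf hg).deriv]
  simp only [discreteSeparable, linearTaylor]
  ring

theorem eventually_differentiableAt_discreteSeparable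
    (hf : ∀ᶠ v in 𝓝 ((q₁ - q₀) / Δt), DifferentiableAt ℝ f v)
    (hg : ∀ᶠ q in 𝓝 (b * q₀ + c * q₁), DifferentiableAt ℝ g q) :
    ∀ᶠ p : ℝ × ℝ in 𝓝 (q₀, q₁),
      DifferentiableAt ℝ f ((p.2 - p.1) / Δt) ∧ DifferentiableAt ℝ g (b * p.1 + c * p.2) := by
  have hv : Tendsto (fun p : ℝ × ℝ => (p.2 - p.1) / Δt) (𝓝 (q₀, q₁)) (𝓝 ((q₁ - q₀) / Δt)) :=
    ((continuous_snd.sub continuous_fst).div_const Δt).tendsto _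
  have hq : Tendsto (fun p : ℝ × ℝ => b * p.1 + c * p.2) (𝓝 (q₀, q₁)) (𝓝 (b * q₀ + c * q₁)) :=
    ((continuous_const.mul continuous_fst).add (continuous_const.mul continuous_snd)).tendsto _
  exact (hv.eventually hf).and (hq.eventually hg)

theorem deriv_fst_discreteSeparable_eventuallyEq (α β : ℝ)
    (hf : ∀ᶠ v in 𝓝 ((q₁ - q₀) / Δt), DifferentiableAt ℝ f v)
    (hg : ∀ᶠ q in 𝓝 (b * q₀ + c * q₁), DifferentiableAt ℝ g q) :
    (fun p : ℝ × ℝ => deriv (fun x => discreteSeparable Δt b c α β f g x p.2) p.1) =ᶠ[𝓝 (q₀, q₁)]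
      fun p => discreteSeparable Δt b c (-α / Δt) (β * b) (deriv f) (deriv g) p.1 p.2 := by
  filter_upwards [eventually_differentiableAt_discreteSeparable hf hg] with p hp
  exact (hasDerivAt_discreteSeparable_fst α β hp.1 hp.2).deriv

theorem deriv_snd_discreteSeparable_eventuallyEq (α β : ℝ)
    (hf : ∀ᶠ v in 𝓝 ((q₁ - q₀) / Δt), DifferentiableAt ℝ f v)
    (hg : ∀ᶠ q in 𝓝 (b * q₀ + c * q₁), DifferentiableAt ℝ g q) :
    (fun p : ℝ × ℝ => deriv (fun y => discreteSeparable Δt b c α β f g p.1 y) p.2) =ᶠ[𝓝 (q₀, q₁)]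
      fun p => discreteSeparable Δt b c (α / Δt) (β * c) (deriv f) (deriv g) p.1 p.2 := by
  filter_upwards [eventually_differentiableAt_discreteSeparable hf hg] with p hp
  exact (hasDerivAt_discreteSeparable_snd α β hp.1 hp.2).deriv

end DiscreteSeparable

end

theorem jacobian_lin_eq_quadratic_approx_general
    (V W : ℝ → ℝ) (L : ℝ → ℝ → ℝ) (hL : ∀ q qd, L q qd = V qd + W q)
    (qa qda : ℝ) (hVa : AnalyticAt ℝ V qda) (hWa : AnalyticAt ℝ W qa)
    (b c Δt : ℝ)
    (Lt : ℝ → ℝ → ℝ)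
    (hLt : ∀ q qd, Lt q qd =
      L qa qda + deriv W qa * (q - qa) + deriv V qda * (qd - qda)
        + (1/2) * deriv (deriv W) qa * (q - qa)^2
        + (1/2) * deriv (deriv V) qda * (qd - qda)^2)
    (Ld Ltd : ℝ → ℝ → ℝ)
    (hLd : ∀ q0 q1, Ld q0 q1 = Δt * L (b * q0 + c * q1) ((q1 - q0) / Δt))
    (hLtd : ∀ q0 q1, Ltd q0 q1 = Δt * Lt (b * q0 + c * q1) ((q1 - q0) / Δt))
    (q0a q1a : ℝ) (hqa : b * q0a + c * q1a = qa) (hqda : (q1a - q0a) / Δt = qda)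
    (D1Ld D2Ld : ℝ → ℝ → ℝ)
    (hD1 : ∀ q0 q1, D1Ld q0 q1 = deriv (fun x => Ld x q1) q0)
    (hD2 : ∀ q0 q1, D2Ld q0 q1 = deriv (fun y => Ld q0 y) q1) :
    (∀ q0 q1 : ℝ,
      D1Ld q0a q1a + deriv (fun x => D1Ld x q1a) q0a * (q0 - q0a)
          + deriv (fun y => D1Ld q0a y) q1a * (q1 - q1a)
        = deriv (fun x => Ltd x q1) q0) ∧
    (∀ q0 q1 : ℝ,
      D2Ld q0a q1a + deriv (fun x => D2Ld x q1a) q0a * (q0 - q0a)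
          + deriv (fun y => D2Ld q0a y) q1a * (q1 - q1a)
        = deriv (fun y => Ltd q0 y) q1) := by
  suffices ∀ q0 q1, jacobianLinearization D1Ld q0a q1a q0 q1 = deriv (fun x => Ltd x q1) q0 ∧
      jacobianLinearization D2Ld q0a q1a q0 q1 = deriv (fun y => Ltd q0 y) q1 from
    ⟨fun q0 q1 => (this q0 q1).1, fun q0 q1 => (this q0 q1).2⟩
  subst hqa hqda
  obtain rfl : Ld = discreteSeparable Δt b c Δt Δt V W := by
    funext q0 q1; rw [hLd, hL, discreteSeparable]; ring
  obtain rfl :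
      Ltd = discreteSeparable Δt b c Δt Δt (quadraticTaylor V _) (quadraticTaylor W _) := by
    funext q0 q1; rw [hLtd, hLt, hL, discreteSeparable, quadraticTaylor, quadraticTaylor]; ring
  obtain rfl := funext₂ hD1
  obtain rfl := funext₂ hD2
  have hV := hVa.eventually_analyticAt.mono fun _ h => h.differentiableAt
  have hW := hWa.eventually_analyticAt.mono fun _ h => h.differentiableAt
  have hV' := hVa.deriv.differentiableAt
  have hW' := hWa.deriv.differentiableAt
  intro q0 q1
  constructor
  · rw [jacobianLinearization_congr (deriv_fst_discreteSeparable_eventuallyEq Δt Δt hV hW),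
      jacobianLinearization_discreteSeparable _ _ hV' hW',
      (hasDerivAt_discreteSeparable_fst _ _ (hasDerivAt_quadraticTaylor _ _ _).differentiableAt
        (hasDerivAt_quadraticTaylor _ _ _).differentiableAt).deriv, deriv_quadraticTaylor,
      deriv_quadraticTaylor]
  · rw [jacobianLinearization_congr (deriv_snd_discreteSeparable_eventuallyEq Δt Δt hV hW),
      jacobianLinearization_discreteSeparable _ _ hV' hW',
      (hasDerivAt_discreteSeparable_snd _ _ (hasDerivAt_quadraticTaylor _ _ _).differentiableAt
        (hasDerivAt_quadraticTaylor _ _ _).differentiableAt).deriv, deriv_quadraticTaylor,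
      deriv_quadraticTaylor]

/-- for a separable analytic Lagrangian, the Jacobian linearization of the
discrete Euler–Lagrange gradients `D₁L_d`, `D₂L_d` at a consistent approximation point
coincides with the gradients of the discrete Lagrangian built from the second-order
Taylor polynomial of `L`. -/
theorem jacobian_lin_eq_quadratic_approx
    (V W : ℝ → ℝ) (L : ℝ → ℝ → ℝ) (hL : ∀ q qd, L q qd = V qd + W q)
    (qa qda : ℝ) (hVa : AnalyticAt ℝ V qda) (hWa : AnalyticAt ℝ W qa)
    (b c Δt : ℝ) (hΔt : 0 < Δt)
    (Lt : ℝ → ℝ → ℝ)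
    (hLt : ∀ q qd, Lt q qd =
      L qa qda + deriv W qa * (q - qa) + deriv V qda * (qd - qda)
        + (1/2) * deriv (deriv W) qa * (q - qa)^2
        + (1/2) * deriv (deriv V) qda * (qd - qda)^2)
    (Ld Ltd : ℝ → ℝ → ℝ)
    (hLd : ∀ q0 q1, Ld q0 q1 = Δt * L (b * q0 + c * q1) ((q1 - q0) / Δt))
    (hLtd : ∀ q0 q1, Ltd q0 q1 = Δt * Lt (b * q0 + c * q1) ((q1 - q0) / Δt))
    (q0a q1a : ℝ) (hqa : b * q0a + c * q1a = qa) (hqda : (q1a - q0a) / Δt = qda)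
    (D1Ld D2Ld : ℝ → ℝ → ℝ)
    (hD1 : ∀ q0 q1, D1Ld q0 q1 = deriv (fun x => Ld x q1) q0)
    (hD2 : ∀ q0 q1, D2Ld q0 q1 = deriv (fun y => Ld q0 y) q1) :
    (∀ q0 q1 : ℝ,
      D1Ld q0a q1a + deriv (fun x => D1Ld x q1a) q0a * (q0 - q0a)
          + deriv (fun y => D1Ld q0a y) q1a * (q1 - q1a)
        = deriv (fun x => Ltd x q1) q0) ∧
    (∀ q0 q1 : ℝ,
      D2Ld q0a q1a + deriv (fun x => D2Ld x q1a) q0a * (q0 - q0a)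
          + deriv (fun y => D2Ld q0a y) q1a * (q1 - q1a)
        = deriv (fun y => Ltd q0 y) q1) :=
  jacobian_lin_eq_quadratic_approx_general V W L hL qa qda hVa hWa b c Δt Lt hLt Ld Ltd hLd hLtd q0a
    q1a hqa hqda D1Ld D2Ld hD1 hD2
end

section
/- Let f : R × R × R → R be twice continuously differentiable and separable, f(q, q̇, u) = z(q) + y(q̇) + r(u), and let f̃ be its first-order Taylor approximation at a = (qᵃ, q̇ᵃ, uᵃ). Define discrete forces f_i^± = (Δt/2) f(b q0 + c q1, (q1−q0)/Δt, u) and f̃_i^± = (Δt/2) f̃(b q0 + c q1, (q1−q0)/Δt, u). Then f̃_i^± is affine in (q0, q1, u), and f̃_i^± equals the Jacobian linearization of f_i^± at any point (q0ᵃ, q1ᵃ, uᵃ) with b q0ᵃ + c q1ᵃ = qᵃ and (q1ᵃ − q0ᵃ)/Δt = q̇ᵃ. -/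
/-!
The first-order Taylor approximation of a separable force is affine, and composing an affine
map with the affine change of variables `(q₀, q₁) ↦ (b q₀ + c q₁, (q₁ - q₀) / Δt)` keeps it
affine. By the chain rule through the same change of variables, the partial derivatives of the
discrete force at a consistent point are exactly the coefficients of that affine map.
-/

noncomputable def discreteForce (Δt b c : ℝ) (f : ℝ → ℝ → ℝ → ℝ) (q₀ q₁ u : ℝ) : ℝ :=
  Δt / 2 * f (b * q₀ + c * q₁) ((q₁ - q₀) / Δt) u

theorem discreteForce_of_affine {A B C D : ℝ} {f : ℝ → ℝ → ℝ → ℝ}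
    (hf : ∀ q qd u, f q qd u = A * q + B * qd + C * u + D) (Δt b c q₀ q₁ u : ℝ) :
    discreteForce Δt b c f q₀ q₁ u =
      Δt / 2 * (A * b - B / Δt) * q₀ + Δt / 2 * (A * c + B / Δt) * q₁ + Δt / 2 * C * u
        + Δt / 2 * D := by
  rw [discreteForce, hf]
  ring

section Separable

variable {z y r : ℝ → ℝ} {z' y' r' : ℝ} {Δt b c q₀ q₁ u : ℝ}

theorem hasDerivAt_discreteForce_separable_q₀ (hz : HasDerivAt z z' (b * q₀ + c * q₁))
    (hy : HasDerivAt y y' ((q₁ - q₀) / Δt)) :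
    HasDerivAt (fun x => discreteForce Δt b c (fun q qd u => z q + y qd + r u) x q₁ u)
      (Δt / 2 * (z' * b - y' / Δt)) q₀ := by
  have hzb := hz.comp q₀ (((hasDerivAt_id q₀).const_mul b).add_const (c * q₁))
  have hyb := hy.comp q₀ (((hasDerivAt_id q₀).const_sub q₁).div_const Δt)
  exact (((hzb.add hyb).add_const (r u)).const_mul (Δt / 2)).congr_deriv (by ring)

theorem hasDerivAt_discreteForce_separable_q₁ (hz : HasDerivAt z z' (b * q₀ + c * q₁))
    (hy : HasDerivAt y y' ((q₁ - q₀) / Δt)) :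
    HasDerivAt (fun x => discreteForce Δt b c (fun q qd u => z q + y qd + r u) q₀ x u)
      (Δt / 2 * (z' * c + y' / Δt)) q₁ := by
  have hzc := hz.comp q₁ (((hasDerivAt_id q₁).const_mul c).const_add (b * q₀))
  have hyc := hy.comp q₁ (((hasDerivAt_id q₁).sub_const q₀).div_const Δt)
  exact (((hzc.add hyc).add_const (r u)).const_mul (Δt / 2)).congr_deriv (by ring)

theorem hasDerivAt_discreteForce_separable_u (hr : HasDerivAt r r' u) :
    HasDerivAt (fun x => discreteForce Δt b c (fun q qd u => z q + y qd + r u) q₀ q₁ x)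
      (Δt / 2 * r') u := by
  simpa only [discreteForce, add_assoc] using
    (hr.const_add (z (b * q₀ + c * q₁) + y ((q₁ - q₀) / Δt))).const_mul (Δt / 2)

end Separable

theorem discrete_force_linearization_general
    (z y r : ℝ → ℝ) (hz : ContDiff ℝ 2 z) (hy : ContDiff ℝ 2 y) (hr : ContDiff ℝ 2 r)
    (f : ℝ → ℝ → ℝ → ℝ) (hf : ∀ q qd u, f q qd u = z q + y qd + r u)
    (qa qda ua b c Δt : ℝ)
    (ft : ℝ → ℝ → ℝ → ℝ)
    (hft : ∀ q qd u, ft q qd u = f qa qda ua + deriv z qa * (q - qa)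
        + deriv y qda * (qd - qda) + deriv r ua * (u - ua))
    (fd ftd : ℝ → ℝ → ℝ → ℝ)
    (hfd : ∀ q0 q1 u, fd q0 q1 u = (Δt/2) * f (b * q0 + c * q1) ((q1 - q0) / Δt) u)
    (hftd : ∀ q0 q1 u, ftd q0 q1 u = (Δt/2) * ft (b * q0 + c * q1) ((q1 - q0) / Δt) u)
    (q0a q1a : ℝ) (hqa : b * q0a + c * q1a = qa) (hqda : (q1a - q0a) / Δt = qda) :
    (∃ α β γ δ : ℝ, ∀ q0 q1 u, ftd q0 q1 u = α * q0 + β * q1 + γ * u + δ) ∧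
    (∀ q0 q1 u : ℝ,
      ftd q0 q1 u = fd q0a q1a ua
        + deriv (fun x => fd x q1a ua) q0a * (q0 - q0a)
        + deriv (fun x => fd q0a x ua) q1a * (q1 - q1a)
        + deriv (fun x => fd q0a q1a x) ua * (u - ua)) := by
  have hfd' : fd = discreteForce Δt b c (fun q qd u => z q + y qd + r u) := by
    funext q0 q1 u
    rw [hfd, hf, discreteForce]
  have hftd' : ftd = discreteForce Δt b c ft := funext₃ hftd
  have hft_affine : ∀ q qd u, ft q qd u = deriv z qa * q + deriv y qda * qd + deriv r ua * u
      + (f qa qda ua - deriv z qa * qa - deriv y qda * qda - deriv r ua * ua) := by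
    intro q qd u
    rw [hft]
    ring
  refine ⟨⟨_, _, _, _, by rw [hftd']; exact discreteForce_of_affine hft_affine Δt b c⟩, ?_⟩
  subst hqa hqda
  have hz' := (hz.differentiable (by norm_num) (b * q0a + c * q1a)).hasDerivAt
  have hy' := (hy.differentiable (by norm_num) ((q1a - q0a) / Δt)).hasDerivAt
  have hr' := (hr.differentiable (by norm_num) ua).hasDerivAt
  intro q0 q1 u
  rw [hfd', (hasDerivAt_discreteForce_separable_q₀ hz' hy').deriv,
    (hasDerivAt_discreteForce_separable_q₁ hz' hy').deriv,
    (hasDerivAt_discreteForce_separable_u hr').deriv, hftd',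
    discreteForce_of_affine hft_affine, discreteForce, hf]
  ring

/-- the discrete force built from the first-order Taylor approximation of a
separable force is affine, and coincides with the Jacobian linearization of the discrete
force at any consistent approximation point. -/
theorem discrete_force_linearization
    (z y r : ℝ → ℝ) (hz : ContDiff ℝ 2 z) (hy : ContDiff ℝ 2 y) (hr : ContDiff ℝ 2 r)
    (f : ℝ → ℝ → ℝ → ℝ) (hf : ∀ q qd u, f q qd u = z q + y qd + r u)
    (qa qda ua b c Δt : ℝ) (hΔt : 0 < Δt)
    (ft : ℝ → ℝ → ℝ → ℝ)
    (hft : ∀ q qd u, ft q qd u = f qa qda ua + deriv z qa * (q - qa)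
        + deriv y qda * (qd - qda) + deriv r ua * (u - ua))
    (fd ftd : ℝ → ℝ → ℝ → ℝ)
    (hfd : ∀ q0 q1 u, fd q0 q1 u = (Δt/2) * f (b * q0 + c * q1) ((q1 - q0) / Δt) u)
    (hftd : ∀ q0 q1 u, ftd q0 q1 u = (Δt/2) * ft (b * q0 + c * q1) ((q1 - q0) / Δt) u)
    (q0a q1a : ℝ) (hqa : b * q0a + c * q1a = qa) (hqda : (q1a - q0a) / Δt = qda) :
    (∃ α β γ δ : ℝ, ∀ q0 q1 u, ftd q0 q1 u = α * q0 + β * q1 + γ * u + δ) ∧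
    (∀ q0 q1 u : ℝ,
      ftd q0 q1 u = fd q0a q1a ua
        + deriv (fun x => fd x q1a ua) q0a * (q0 - q0a)
        + deriv (fun x => fd q0a x ua) q1a * (q1 - q1a)
        + deriv (fun x => fd q0a q1a x) ua * (u - ua)) :=
  discrete_force_linearization_general z y r hz hy hr f hf qa qda ua b c Δt ft hft fd ftd hfd hftd
    q0a q1a hqa hqda
end

section
/- Consider the forced discrete Euler–Lagrange equations p_i + D₁L_d(q_i,q_{i+1}) + f_i⁻ = 0 and p_{i+1} − D₂L_d(q_i,q_{i+1}) − f_i⁺ = 0 with L_d(q0,q1) = Δt[(1/2)‖(q1−q0)/Δt‖² − gᵀ(b q0 + c q1)], b + c = 1, and discrete forces f_i⁻ = f_i⁺ = (Δt/2) F_i for arbitrary vectors F_i ∈ R^n. Then for each coordinate j with g_j = 0 and every N ≥ 0, the discrete momentum satisfies p_N^j − p_0^j = Δt · Σ_{i=0}^{N−1} F_i^j. -/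
/-!
With the discrete Lagrangian of a particle in the uniform field `g`, the partial derivatives are
`D₁ L_d(q₀, q₁) = -(q₁ - q₀)/Δt - Δt b g` and `D₂ L_d(q₀, q₁) = (q₁ - q₀)/Δt - Δt c g`, so adding the
two forced discrete Euler–Lagrange equations cancels the velocity terms and leaves the momentum
balance `p_{i+1} - p_i = f_i⁻ + f_i⁺ - Δt (b + c) g`. In a direction with `g_j = 0` each step changes
the momentum by `Δt F_i^j`, and the sum telescopes.
-/

open Matrix

section DotProduct

variable {𝕜 ι E : Type*} [NontriviallyNormedField 𝕜] [Fintype ι]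
  [NormedAddCommGroup E] [NormedSpace 𝕜 E] {f g : E → ι → 𝕜} {f' g' : E →L[𝕜] ι → 𝕜} {x : E}

theorem HasFDerivAt.dotProduct (hf : HasFDerivAt f f' x) (hg : HasFDerivAt g g' x) :
    HasFDerivAt (fun y => f y ⬝ᵥ g y)
      (∑ i, (f x i • (ContinuousLinearMap.proj i).comp g' +
        g x i • (ContinuousLinearMap.proj i).comp f')) x :=
  HasFDerivAt.fun_sum fun i _ => (hasFDerivAt_pi'.1 hf i).mul (hasFDerivAt_pi'.1 hg i)

theorem sum_smul_proj_comp_add_apply (a b : ι → 𝕜) (f' g' : E →L[𝕜] ι → 𝕜) (v : E) :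
    (∑ i, (a i • (ContinuousLinearMap.proj i).comp g' +
      b i • (ContinuousLinearMap.proj i).comp f')) v = a ⬝ᵥ g' v + f' v ⬝ᵥ b := by
  simp [dotProduct, Finset.sum_add_distrib, mul_comm]

end DotProduct

section DiscreteLagrangian

variable {ι : Type*} [Fintype ι] (Δt b c : ℝ) (g : ι → ℝ)

noncomputable def discreteLagrangian (q₀ q₁ : ι → ℝ) : ℝ :=
  Δt * ((1/2) * ((Δt⁻¹ • (q₁ - q₀)) ⬝ᵥ (Δt⁻¹ • (q₁ - q₀))) - g ⬝ᵥ (b • q₀ + c • q₁))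

theorem fderiv_discreteLagrangian_right_apply (q₀ q₁ v : ι → ℝ) :
    fderiv ℝ (discreteLagrangian Δt b c g q₀) q₁ v
      = Δt⁻¹ * ((q₁ - q₀) ⬝ᵥ v) - Δt * c * (g ⬝ᵥ v) := by
  have hvel : HasFDerivAt (fun y => Δt⁻¹ • (y - q₀))
      (Δt⁻¹ • ContinuousLinearMap.id ℝ (ι → ℝ)) q₁ :=
    ((hasFDerivAt_id q₁).sub_const q₀).const_smul Δt⁻¹
  have hpos : HasFDerivAt (fun y => b • q₀ + c • y) (c • ContinuousLinearMap.id ℝ (ι → ℝ)) q₁ :=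
    ((hasFDerivAt_id q₁).const_smul c).const_add _
  have hL : HasFDerivAt (discreteLagrangian Δt b c g q₀) _ q₁ :=
    (((hvel.dotProduct hvel).const_mul (1/2)).sub
      ((hasFDerivAt_const g q₁).dotProduct hpos)).const_mul Δt
  -- true also at `Δt = 0`, where `0⁻¹ = 0`
  have hΔt : Δt * Δt⁻¹ * Δt⁻¹ = Δt⁻¹ := by simpa using inv_mul_mul_self Δt⁻¹
  rw [hL.fderiv]
  simp only [_root_.smul_apply, _root_.sub_apply, sum_smul_proj_comp_add_apply,
    ContinuousLinearMap.id_apply, _root_.zero_apply, zero_dotProduct, add_zero]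
  rw [dotProduct_comm (Δt⁻¹ • v)]
  simp only [dotProduct_smul, smul_dotProduct, smul_eq_mul]
  linear_combination ((q₁ - q₀) ⬝ᵥ v) * hΔt

theorem fderiv_discreteLagrangian_left_apply (q₀ q₁ v : ι → ℝ) :
    fderiv ℝ (fun x => discreteLagrangian Δt b c g x q₁) q₀ v
      = -(Δt⁻¹ * ((q₁ - q₀) ⬝ᵥ v)) - Δt * b * (g ⬝ᵥ v) := by
  have hvel : HasFDerivAt (fun x => Δt⁻¹ • (q₁ - x))
      (Δt⁻¹ • -ContinuousLinearMap.id ℝ (ι → ℝ)) q₀ :=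
    ((hasFDerivAt_id q₀).const_sub q₁).const_smul Δt⁻¹
  have hpos : HasFDerivAt (fun x => b • x + c • q₁) (b • ContinuousLinearMap.id ℝ (ι → ℝ)) q₀ :=
    ((hasFDerivAt_id q₀).const_smul b).add_const _
  have hL : HasFDerivAt (fun x => discreteLagrangian Δt b c g x q₁) _ q₀ :=
    (((hvel.dotProduct hvel).const_mul (1/2)).sub
      ((hasFDerivAt_const g q₀).dotProduct hpos)).const_mul Δt
  have hΔt : Δt * Δt⁻¹ * Δt⁻¹ = Δt⁻¹ := by simpa using inv_mul_mul_self Δt⁻¹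
  rw [hL.fderiv]
  simp only [_root_.smul_apply, _root_.sub_apply, _root_.neg_apply, sum_smul_proj_comp_add_apply,
    ContinuousLinearMap.id_apply, _root_.zero_apply, zero_dotProduct, add_zero]
  rw [dotProduct_comm (Δt⁻¹ • -v)]
  simp only [dotProduct_smul, smul_dotProduct, dotProduct_neg, smul_eq_mul]
  linear_combination -((q₁ - q₀) ⬝ᵥ v) * hΔt

theorem momentum_sub_eq_of_forced_eulerLagrange [DecidableEq ι] {p₀ p₁ q₀ q₁ : ι → ℝ}
    {fm fp : ℝ} {j : ι}
    (hm : p₀ j + fderiv ℝ (fun x => discreteLagrangian Δt b c g x q₁) q₀ (Pi.single j 1)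
      + fm = 0)
    (hp : p₁ j - fderiv ℝ (discreteLagrangian Δt b c g q₀) q₁ (Pi.single j 1) - fp = 0) :
    p₁ j - p₀ j = fm + fp - Δt * (b + c) * g j := by
  rw [fderiv_discreteLagrangian_left_apply, dotProduct_single_one, dotProduct_single_one] at hm
  rw [fderiv_discreteLagrangian_right_apply, dotProduct_single_one, dotProduct_single_one] at hp
  linear_combination hp - hm

end DiscreteLagrangian

theorem discrete_noether_forced_general (n : ℕ) (Δt b c : ℝ)
    (g : Fin n → ℝ)
    (Ld : (Fin n → ℝ) → (Fin n → ℝ) → ℝ)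
    (hLd : ∀ q0 q1 : Fin n → ℝ, Ld q0 q1 =
      Δt * ((1/2) * ((Δt⁻¹ • (q1 - q0)) ⬝ᵥ (Δt⁻¹ • (q1 - q0)))
        - g ⬝ᵥ (b • q0 + c • q1)))
    (q p F : ℕ → Fin n → ℝ)
    (heqm : ∀ i j, p i j + fderiv ℝ (fun x => Ld x (q (i+1))) (q i) (Pi.single j 1)
      + (Δt/2) * F i j = 0)
    (heqp : ∀ i j, p (i+1) j - fderiv ℝ (fun x => Ld (q i) x) (q (i+1)) (Pi.single j 1)
      - (Δt/2) * F i j = 0) :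
    ∀ j, g j = 0 → ∀ N : ℕ, p N j - p 0 j = Δt * ∑ i ∈ Finset.range N, F i j := by
  intro j hg N
  obtain rfl : Ld = discreteLagrangian Δt b c g := funext fun q0 => funext (hLd q0)
  have step (i : ℕ) : p (i+1) j - p i j = Δt * F i j := by
    rw [momentum_sub_eq_of_forced_eulerLagrange Δt b c g (heqm i j) (heqp i j), hg]
    ring
  rw [← Finset.sum_range_sub (fun i => p i j), Finset.mul_sum]
  exact Finset.sum_congr rfl fun i _ => step i

/-- discrete Noether theorem with forcing: for coordinates with `g j = 0`,
the change of discrete momentum equals the accumulated discrete impulse. -/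
theorem discrete_noether_forced (n : ℕ) (Δt b c : ℝ) (hΔt : 0 < Δt) (hbc : b + c = 1)
    (g : Fin n → ℝ)
    (Ld : (Fin n → ℝ) → (Fin n → ℝ) → ℝ)
    (hLd : ∀ q0 q1 : Fin n → ℝ, Ld q0 q1 =
      Δt * ((1/2) * ((Δt⁻¹ • (q1 - q0)) ⬝ᵥ (Δt⁻¹ • (q1 - q0)))
        - g ⬝ᵥ (b • q0 + c • q1)))
    (q p F : ℕ → Fin n → ℝ)
    (heqm : ∀ i j, p i j + fderiv ℝ (fun x => Ld x (q (i+1))) (q i) (Pi.single j 1)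
      + (Δt/2) * F i j = 0)
    (heqp : ∀ i j, p (i+1) j - fderiv ℝ (fun x => Ld (q i) x) (q (i+1)) (Pi.single j 1)
      - (Δt/2) * F i j = 0) :
    ∀ j, g j = 0 → ∀ N : ℕ, p N j - p 0 j = Δt * ∑ i ∈ Finset.range N, F i j :=
  discrete_noether_forced_general n Δt b c g Ld hLd q p F heqm heqp
end

section
/- Let Φ ∈ R^{n×n}, and suppose for each j = 1,…,J matrices Ĉ_j, D̂_j and a feedback gain K̂ are given such that P ∈ R^{n×n} is symmetric positive definite and satisfies P − (Φ + Ĉ_j + D̂_j K̂)ᵀ P (Φ + Ĉ_j + D̂_j K̂) ⪰ Q + K̂ᵀ R K̂ for all j, with Q ⪰ 0 and R ≻ 0. Then for any sequence x_{k+1} = (Φ + C_k + D_k K̂) x_k where each (C_k, D_k) is a convex combination of {(Ĉ_j, D̂_j)}: the function V(x) = xᵀPx satisfies V(x_{k+1}) ≤ V(x_k) − (x_kᵀ Q x_k + x_kᵀ K̂ᵀ R K̂ x_k), and hence Σ_{k=0}^{∞} (x_kᵀ Q x_k + u_kᵀ R u_k) ≤ x₀ᵀ P x₀ with u_k = K̂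 x_k — provided the map x ↦ xᵀ(Φ+C+D K̂)ᵀP(Φ+C+D K̂)x is convex in (C,D) along the convex combinations used (which holds since it is a convex quadratic in (C,D) for fixed x). -/
/-! The quadratic form `v ↦ vᵀ P v` of a positive semidefinite `P` is convex, so its sublevel
sets are convex. The vertex LMIs put every `A_j x` into the sublevel set
`{v | vᵀ P v ≤ xᵀ P x - xᵀ (Q + K̂ᵀ R K̂) x}`, and since the closed-loop matrix `Φ + C + D K̂` is
affine in `(C, D)`, the successor `(∑ μ_j A_j) x = ∑ μ_j (A_j x)` lies there too. Summing the
resulting Lyapunov decrease telescopes, and `V ≥ 0` bounds every partial sum of the stage costs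
by `V(x₀)`. -/

open Matrix Finset

variable {ι κ J : Type*} [Fintype κ]

lemma add_sum_smul_add_sum_smul_mul {s : Finset J} {μ : J → ℝ} (hμ : ∑ j ∈ s, μ j = 1)
    (Φ : Matrix ι ι ℝ) (C : J → Matrix ι ι ℝ) (D : J → Matrix ι κ ℝ) (K : Matrix κ ι ℝ) :
    Φ + ∑ j ∈ s, μ j • C j + (∑ j ∈ s, μ j • D j) * K = ∑ j ∈ s, μ j • (Φ + C j + D j * K) := by
  simp only [smul_add, sum_add_distrib, ← sum_smul, hμ, one_smul, Matrix.sum_mul, Matrix.smul_mul]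

variable [Fintype ι]

namespace Matrix

lemma dotProduct_mulVec_mulVec_eq_transpose_mul_mul {α : Type*} [CommSemiring α]
    (A : Matrix ι κ α) (P : Matrix ι ι α) (v : κ → α) :
    (A *ᵥ v) ⬝ᵥ (P *ᵥ (A *ᵥ v)) = v ⬝ᵥ ((Aᵀ * P * A) *ᵥ v) := by
  rw [← mulVec_mulVec, ← mulVec_mulVec, dotProduct_transpose_mulVec, dotProduct_comm]

lemma PosSemidef.convexOn_dotProduct_mulVec {P : Matrix ι ι ℝ} (hP : P.PosSemidef) :
    ConvexOn ℝ Set.univ fun v : ι → ℝ => v ⬝ᵥ (P *ᵥ v) := by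
  refine ⟨convex_univ, fun u _ w _ a b ha hb hab => ?_⟩
  have hPt : Pᵀ = P := by simpa using hP.isHermitian.eq
  have hsymm : w ⬝ᵥ (P *ᵥ u) = u ⬝ᵥ (P *ᵥ w) := by
    rw [← dotProduct_transpose_mulVec, hPt]
  have hdiff : 0 ≤ (u - w) ⬝ᵥ (P *ᵥ (u - w)) := by
    simpa using hP.dotProduct_mulVec_nonneg (u - w)
  simp only [mulVec_add, mulVec_sub, mulVec_smul, dotProduct_add, add_dotProduct,
    dotProduct_sub, sub_dotProduct, dotProduct_smul, smul_dotProduct, smul_eq_mul, hsymm]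
    at hdiff ⊢
  obtain rfl : b = 1 - a := eq_sub_of_add_eq' hab
  -- `a q(u) + b q(w) - q(a u + b w) = a b q(u - w)` when `a + b = 1`
  nlinarith [mul_nonneg (mul_nonneg ha hb) hdiff]

lemma dotProduct_mulVec_mulVec_le_of_posSemidef_sub {A P S : Matrix ι ι ℝ}
    (h : (P - Aᵀ * P * A - S).PosSemidef) (v : ι → ℝ) :
    (A *ᵥ v) ⬝ᵥ (P *ᵥ (A *ᵥ v)) ≤ v ⬝ᵥ (P *ᵥ v) - v ⬝ᵥ (S *ᵥ v) := by
  have hv := h.dotProduct_mulVec_nonneg v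
  simp only [star_trivial, sub_mulVec, dotProduct_sub] at hv
  rw [dotProduct_mulVec_mulVec_eq_transpose_mul_mul]
  linarith

theorem lyapunov_decrease_sum_smul {P S : Matrix ι ι ℝ} (hP : P.PosSemidef) {s : Finset J}
    {A : J → Matrix ι ι ℝ} (hA : ∀ j ∈ s, (P - (A j)ᵀ * P * A j - S).PosSemidef)
    {μ : J → ℝ} (hμ₀ : ∀ j ∈ s, 0 ≤ μ j) (hμ₁ : ∑ j ∈ s, μ j = 1) (v : ι → ℝ) :
    ((∑ j ∈ s, μ j • A j) *ᵥ v) ⬝ᵥ (P *ᵥ ((∑ j ∈ s, μ j • A j) *ᵥ v)) ≤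
      v ⬝ᵥ (P *ᵥ v) - v ⬝ᵥ (S *ᵥ v) := by
  have hsub := hP.convexOn_dotProduct_mulVec.convex_le (v ⬝ᵥ (P *ᵥ v) - v ⬝ᵥ (S *ᵥ v))
  have hmem := hsub.sum_mem hμ₀ hμ₁ fun j hj =>
    ⟨Set.mem_univ (A j *ᵥ v), dotProduct_mulVec_mulVec_le_of_posSemidef_sub (hA j hj) v⟩
  simpa only [sum_mulVec, smul_mulVec] using hmem.2

end Matrix

lemma tsum_le_of_le_sub_succ {V f : ℕ → ℝ} (hf : ∀ k, 0 ≤ f k) (hV : ∀ k, 0 ≤ V k)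
    (h : ∀ k, V (k + 1) ≤ V k - f k) : ∑' k, f k ≤ V 0 := by
  refine Real.tsum_le_of_sum_range_le hf fun N => ?_
  calc ∑ k ∈ range N, f k ≤ ∑ k ∈ range N, (V k - V (k + 1)) :=
        sum_le_sum fun k _ => by linarith [h k]
    _ = V 0 - V N := sum_range_sub' V N
    _ ≤ V 0 := sub_le_self _ (hV N)

theorem terminal_cost_certification_general (n m J : ℕ)
    (Φ : Matrix (Fin n) (Fin n) ℝ)
    (Chat : Fin J → Matrix (Fin n) (Fin n) ℝ)
    (Dhat : Fin J → Matrix (Fin n) (Fin m) ℝ)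
    (Khat : Matrix (Fin m) (Fin n) ℝ)
    (P Q : Matrix (Fin n) (Fin n) ℝ) (R : Matrix (Fin m) (Fin m) ℝ)
    (hP : P.PosDef) (hQ : Q.PosSemidef) (hR : R.PosDef)
    (hLMI : ∀ j, (P - (Φ + Chat j + Dhat j * Khat)ᵀ * P * (Φ + Chat j + Dhat j * Khat)
      - (Q + Khatᵀ * R * Khat)).PosSemidef)
    (x : ℕ → Fin n → ℝ)
    (C : ℕ → Matrix (Fin n) (Fin n) ℝ) (D : ℕ → Matrix (Fin n) (Fin m) ℝ)
    (hconv : ∀ k, ∃ μ : Fin J → ℝ, (∀ j, 0 ≤ μ j) ∧ (∑ j, μ j = 1) ∧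
      C k = ∑ j, μ j • Chat j ∧ D k = ∑ j, μ j • Dhat j)
    (hdyn : ∀ k, x (k+1) = (Φ + C k + D k * Khat) *ᵥ x k) :
    (∀ k, x (k+1) ⬝ᵥ (P *ᵥ x (k+1)) ≤
      x k ⬝ᵥ (P *ᵥ x k)
        - (x k ⬝ᵥ (Q *ᵥ x k) + x k ⬝ᵥ ((Khatᵀ * R * Khat) *ᵥ x k))) ∧
    ∑' k : ℕ, (x k ⬝ᵥ (Q *ᵥ x k) + (Khat *ᵥ x k) ⬝ᵥ (R *ᵥ (Khat *ᵥ x k)))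
      ≤ x 0 ⬝ᵥ (P *ᵥ x 0) := by
  have hdecrease : ∀ k, x (k+1) ⬝ᵥ (P *ᵥ x (k+1)) ≤
      x k ⬝ᵥ (P *ᵥ x k) - (x k ⬝ᵥ (Q *ᵥ x k) + x k ⬝ᵥ ((Khatᵀ * R * Khat) *ᵥ x k)) := by
    intro k
    obtain ⟨μ, hμ₀, hμ₁, hC, hD⟩ := hconv k
    rw [hdyn k, hC, hD, add_sum_smul_add_sum_smul_mul hμ₁, ← dotProduct_add, ← add_mulVec]
    exact lyapunov_decrease_sum_smul hP.posSemidef (fun j _ => hLMI j) (fun j _ => hμ₀ j) hμ₁ _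
  refine ⟨hdecrease, tsum_le_of_le_sub_succ (V := fun k => x k ⬝ᵥ (P *ᵥ x k))
    (fun k => ?_) (fun k => ?_) fun k => ?_⟩
  · exact add_nonneg (by simpa using hQ.dotProduct_mulVec_nonneg (x k))
      (by simpa using hR.posSemidef.dotProduct_mulVec_nonneg (Khat *ᵥ x k))
  · simpa using hP.posSemidef.dotProduct_mulVec_nonneg (x k)
  · rw [dotProduct_mulVec_mulVec_eq_transpose_mul_mul]
    exact hdecrease k

/-- terminal cost certification: the vertex LMIs imply a Lyapunov decrease
along all trajectories of the polytopic uncertain closed loop, and hence the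
infinite-horizon cost is bounded by `x₀ᵀ P x₀`. -/
theorem terminal_cost_certification (n m J : ℕ)
    (Φ : Matrix (Fin n) (Fin n) ℝ)
    (Chat : Fin J → Matrix (Fin n) (Fin n) ℝ)
    (Dhat : Fin J → Matrix (Fin n) (Fin m) ℝ)
    (Khat : Matrix (Fin m) (Fin n) ℝ)
    (P Q : Matrix (Fin n) (Fin n) ℝ) (R : Matrix (Fin m) (Fin m) ℝ)
    (hP : P.PosDef) (hPsymm : P.IsSymm) (hQ : Q.PosSemidef) (hR : R.PosDef)
    (hLMI : ∀ j, (P - (Φ + Chat j + Dhat j * Khat)ᵀ * P * (Φ + Chat j + Dhat j * Khat)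
      - (Q + Khatᵀ * R * Khat)).PosSemidef)
    (x : ℕ → Fin n → ℝ)
    (C : ℕ → Matrix (Fin n) (Fin n) ℝ) (D : ℕ → Matrix (Fin n) (Fin m) ℝ)
    (hconv : ∀ k, ∃ μ : Fin J → ℝ, (∀ j, 0 ≤ μ j) ∧ (∑ j, μ j = 1) ∧
      C k = ∑ j, μ j • Chat j ∧ D k = ∑ j, μ j • Dhat j)
    (hdyn : ∀ k, x (k+1) = (Φ + C k + D k * Khat) *ᵥ x k) :
    (∀ k, x (k+1) ⬝ᵥ (P *ᵥ x (k+1)) ≤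
      x k ⬝ᵥ (P *ᵥ x k)
        - (x k ⬝ᵥ (Q *ᵥ x k) + x k ⬝ᵥ ((Khatᵀ * R * Khat) *ᵥ x k))) ∧
    ∑' k : ℕ, (x k ⬝ᵥ (Q *ᵥ x k) + (Khat *ᵥ x k) ⬝ᵥ (R *ᵥ (Khat *ᵥ x k)))
      ≤ x 0 ⬝ᵥ (P *ᵥ x 0) :=
  terminal_cost_certification_general n m J Φ Chat Dhat Khat P Q R hP hQ hR hLMI x C D hconv hdyn
end
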